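/- arXiv:2005.01037 — 4 statements merged into one kernel-verified Lean document; each statement's English description precedes it below -/
import Mathlib

section
/- If G is a connected simple graph on n vertices with m edges and 0 ≤ α ≤ 1, then E^{A_α}(G) ≤ √(n · Σ_{i=1}^n (ρ_i − 2αm/n)²); equivalently, E^{A_α}(G) ≤ √(2S(G)·n) where 2S(G) = α²·Zg(G) + 2m(1−α)² − 4α²m²/n. -/
open Matrix Finset

noncomputable def alphaMatrix {n : ℕ} (G : SimpleGraph (Fin n)) [DecidableRel G.Adj] (α : ℝ) :
    Matrix (Fin n) (Fin n) ℝ :=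
  α • Matrix.diagonal (fun v => (G.degree v : ℝ)) + (1 - α) • (G.adjMatrix ℝ)

lemma adjMatrix_isHermitian {n : ℕ} (G : SimpleGraph (Fin n)) [DecidableRel G.Adj] :
    (G.adjMatrix ℝ).IsHermitian := by
  rw [Matrix.IsHermitian, conjTranspose_eq_transpose_of_trivial]
  exact (G.isSymm_adjMatrix (α := ℝ))

lemma alphaMatrix_isHermitian {n : ℕ} (G : SimpleGraph (Fin n)) [DecidableRel G.Adj] (α : ℝ) :
    (alphaMatrix G α).IsHermitian := by
  rw [Matrix.IsHermitian, conjTranspose_eq_transpose_of_trivial]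
  unfold alphaMatrix
  rw [Matrix.transpose_add, Matrix.transpose_smul, Matrix.transpose_smul,
    Matrix.diagonal_transpose, (G.isSymm_adjMatrix (α := ℝ))]

noncomputable def zagreb {n : ℕ} (G : SimpleGraph (Fin n)) [DecidableRel G.Adj] : ℝ :=
  ∑ v, (G.degree v : ℝ) ^ 2

noncomputable def alphaEnergy {n : ℕ} (G : SimpleGraph (Fin n)) [DecidableRel G.Adj] (α : ℝ) : ℝ :=
  ∑ i, |(alphaMatrix_isHermitian G α).eigenvalues i
        - 2 * α * (G.edgeFinset.card : ℝ) / n|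

noncomputable def adjEnergy {n : ℕ} (G : SimpleGraph (Fin n)) [DecidableRel G.Adj] : ℝ :=
  ∑ i, |(adjMatrix_isHermitian G).eigenvalues i|

/-!
Cauchy–Schwarz gives `E ≤ √(n ∑ (ρᵢ - c)²)` with `c = 2αm/n` directly. For the second form
expand `∑ (ρᵢ - c)² = ∑ ρᵢ² - 2c ∑ ρᵢ + n c²`: the power sums of the spectrum are
`tr A_α = 2αm` and `tr A_α² = α² Zg + 2m(1-α)²`, since `D A` has zero diagonal and the
diagonal of `A²` is the degree vector.
-/

namespace Matrix.IsHermitian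

variable {𝕜 ι : Type*} [RCLike 𝕜] [Fintype ι] [DecidableEq ι] {A : Matrix ι ι 𝕜}

lemma trace_mul_self_eq_sum_sq_eigenvalues (hA : A.IsHermitian) :
    (A * A).trace = ∑ i, (hA.eigenvalues i : 𝕜) ^ 2 := by
  conv_lhs => rw [hA.spectral_theorem, ← map_mul, Unitary.conjStarAlgAut_apply, trace_mul_cycle,
    Unitary.coe_star_mul_self, one_mul, diagonal_mul_diagonal, trace_diagonal]
  simp [sq]

end Matrix.IsHermitian

namespace Finset

variable {ι : Type*}

lemma sum_sub_const_sq {R : Type*} [CommRing R] (s : Finset ι) (f : ι → R) (c : R) :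
    ∑ i ∈ s, (f i - c) ^ 2 = ∑ i ∈ s, f i ^ 2 - 2 * c * ∑ i ∈ s, f i + #s * c ^ 2 := by
  have h : ∀ i ∈ s, (f i - c) ^ 2 = f i ^ 2 - 2 * c * f i + c ^ 2 := fun _ _ => by ring
  rw [sum_congr rfl h, sum_add_distrib, sum_sub_distrib, mul_sum, sum_const, nsmul_eq_mul]

lemma sum_abs_le_sqrt_card_mul_sum_sq (s : Finset ι) (f : ι → ℝ) :
    ∑ i ∈ s, |f i| ≤ √(#s * ∑ i ∈ s, f i ^ 2) := by
  apply Real.le_sqrt_of_sq_le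
  simpa only [sq_abs] using sq_sum_le_card_mul_sum_sq (s := s) (f := fun i => |f i|)

end Finset

namespace SimpleGraph

variable {V : Type*} [Fintype V] (G : SimpleGraph V) [DecidableRel G.Adj]
  (R : Type*) [NonAssocSemiring R]

lemma sum_degrees_cast : ∑ v, (G.degree v : R) = 2 * #G.edgeFinset := by
  rw [← Nat.cast_sum, G.sum_degrees_eq_twice_card_edges, Nat.cast_mul, Nat.cast_two]

lemma trace_adjMatrix_mul_self : (G.adjMatrix R * G.adjMatrix R).trace = 2 * #G.edgeFinset := by
  simp only [trace, Matrix.diag, adjMatrix_mul_self_apply_self, sum_degrees_cast]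

variable [DecidableEq V]

lemma trace_diagonal_degree_mul_adjMatrix :
    (diagonal (fun v => (G.degree v : R)) * G.adjMatrix R).trace = 0 := by
  simp only [trace, Matrix.diag, diagonal_mul, adjMatrix_apply, G.irrefl, if_false, mul_zero,
    sum_const_zero]

end SimpleGraph

section alphaMatrix

variable {n : ℕ} (G : SimpleGraph (Fin n)) [DecidableRel G.Adj] (α : ℝ)

lemma trace_alphaMatrix : (alphaMatrix G α).trace = α * (2 * #G.edgeFinset) := by
  simp only [alphaMatrix, trace_add, trace_smul, trace_diagonal, G.sum_degrees_cast,
    SimpleGraph.trace_adjMatrix, smul_eq_mul, mul_zero, add_zero]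

lemma trace_alphaMatrix_mul_self : (alphaMatrix G α * alphaMatrix G α).trace =
    α ^ 2 * zagreb G + (1 - α) ^ 2 * (2 * #G.edgeFinset) := by
  have hDA := G.trace_diagonal_degree_mul_adjMatrix ℝ
  have hAD : (G.adjMatrix ℝ * diagonal fun v => (G.degree v : ℝ)).trace = 0 := by
    rwa [trace_mul_comm]
  simp only [alphaMatrix, add_mul, mul_add, smul_mul_smul, trace_add, trace_smul, hDA, hAD,
    G.trace_adjMatrix_mul_self, diagonal_mul_diagonal, trace_diagonal, zagreb, smul_eq_mul, sq]
  ring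

lemma sum_eigenvalues_alphaMatrix :
    ∑ i, (alphaMatrix_isHermitian G α).eigenvalues i = α * (2 * #G.edgeFinset) := by
  simpa using (alphaMatrix_isHermitian G α).trace_eq_sum_eigenvalues.symm.trans
    (trace_alphaMatrix G α)

lemma sum_sq_eigenvalues_alphaMatrix :
    ∑ i, (alphaMatrix_isHermitian G α).eigenvalues i ^ 2 =
      α ^ 2 * zagreb G + (1 - α) ^ 2 * (2 * #G.edgeFinset) := by
  simpa using (alphaMatrix_isHermitian G α).trace_mul_self_eq_sum_sq_eigenvalues.symm.trans
    (trace_alphaMatrix_mul_self G α)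

lemma sum_sq_eigenvalues_alphaMatrix_sub_mean :
    ∑ i, ((alphaMatrix_isHermitian G α).eigenvalues i - 2 * α * #G.edgeFinset / n) ^ 2 =
      α ^ 2 * zagreb G + 2 * #G.edgeFinset * (1 - α) ^ 2 - 4 * α ^ 2 * #G.edgeFinset ^ 2 / n := by
  rw [sum_sub_const_sq, sum_sq_eigenvalues_alphaMatrix, sum_eigenvalues_alphaMatrix, card_univ,
    Fintype.card_fin]
  rcases eq_or_ne (n : ℝ) 0 with hn | hn
  · simp only [hn, div_zero]
    ring
  · field_simp
    ring

lemma alphaEnergy_le_sqrt :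
    alphaEnergy G α ≤ √(n * ∑ i,
      ((alphaMatrix_isHermitian G α).eigenvalues i - 2 * α * #G.edgeFinset / n) ^ 2) := by
  simpa only [alphaEnergy, card_univ, Fintype.card_fin] using sum_abs_le_sqrt_card_mul_sum_sq univ
    fun i => (alphaMatrix_isHermitian G α).eigenvalues i - 2 * α * #G.edgeFinset / n

end alphaMatrix

theorem stmt_6_general {n : ℕ} (G : SimpleGraph (Fin n)) [DecidableRel G.Adj]
    (α : ℝ) :
    alphaEnergy G α ≤
      Real.sqrt ((n : ℝ) *
        ∑ i, ((alphaMatrix_isHermitian G α).eigenvalues i - 2 * α * (G.edgeFinset.card : ℝ) / n) ^ 2) ∧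
    alphaEnergy G α ≤ Real.sqrt ((α ^ 2 * zagreb G + 2 * (G.edgeFinset.card : ℝ) * (1 - α) ^ 2 - 4 * α ^ 2 * (G.edgeFinset.card : ℝ) ^ 2 / n) * n) := by
  refine ⟨alphaEnergy_le_sqrt G α, ?_⟩
  rw [← sum_sq_eigenvalues_alphaMatrix_sub_mean, mul_comm]
  exact alphaEnergy_le_sqrt G α

theorem stmt_6 {n : ℕ} (G : SimpleGraph (Fin n)) [DecidableRel G.Adj] (hG : G.Connected)
    (α : ℝ) (hα0 : 0 ≤ α) (hα1 : α ≤ 1) :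
    alphaEnergy G α ≤
      Real.sqrt ((n : ℝ) *
        ∑ i, ((alphaMatrix_isHermitian G α).eigenvalues i - 2 * α * (G.edgeFinset.card : ℝ) / n) ^ 2) ∧
    alphaEnergy G α ≤ Real.sqrt ((α ^ 2 * zagreb G + 2 * (G.edgeFinset.card : ℝ) * (1 - α) ^ 2 - 4 * α ^ 2 * (G.edgeFinset.card : ℝ) ^ 2 / n) * n) :=
  stmt_6_general G α
end

section
/- If G is a connected simple graph on n ≥ 3 vertices with m edges, then E(G) ≤ 2m/n + √((n−1)·[2m − (2m/n)²]), where E(G) is the (adjacency) energy of G. -/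
/-!
Let `λ₁` be the largest adjacency eigenvalue. Since `∑ λᵢ² = tr A² = 2m`, Cauchy–Schwarz on the
other `n - 1` eigenvalues gives `E(G) ≤ λ₁ + √((n - 1)(2m - λ₁²))`. The Rayleigh quotient of the
all-ones vector shows `λ₁ ≥ 2m/n`, and `x ↦ x + √((n - 1)(2m - x²))` is decreasing for
`x ≥ √(2m/n)`, a range containing `2m/n` because a connected graph has no isolated vertex,
so `n ≤ 2m`.
-/

open Matrix Finset

namespace Matrix.IsHermitian

variable {ι : Type*} [Fintype ι] [DecidableEq ι] {A : Matrix ι ι ℝ} (hA : A.IsHermitian)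

lemma eq_eigenvectorUnitary_mul_diagonal_mul_transpose :
    A = (hA.eigenvectorUnitary : Matrix ι ι ℝ) * diagonal hA.eigenvalues *
      (hA.eigenvectorUnitary : Matrix ι ι ℝ)ᵀ := by
  conv_lhs => rw [hA.spectral_theorem]
  rfl

lemma sum_sq_eigenvalues : ∑ i, hA.eigenvalues i ^ 2 = (A * A).trace := by
  set U : Matrix ι ι ℝ := (hA.eigenvectorUnitary : Matrix ι ι ℝ)
  have hUU : Uᵀ * U = 1 := Unitary.coe_star_mul_self hA.eigenvectorUnitary
  have hAA : A * A = U * (diagonal hA.eigenvalues * diagonal hA.eigenvalues) * Uᵀ := by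
    conv_lhs => rw [hA.eq_eigenvectorUnitary_mul_diagonal_mul_transpose]
    simp only [Matrix.mul_assoc]
    rw [← Matrix.mul_assoc Uᵀ, hUU, Matrix.one_mul]
  rw [hAA, trace_mul_cycle, hUU, Matrix.one_mul, diagonal_mul_diagonal, trace_diagonal]
  simp only [sq]

lemma dotProduct_mulVec_le {c : ℝ} (hc : ∀ i, hA.eigenvalues i ≤ c) (v : ι → ℝ) :
    v ⬝ᵥ (A *ᵥ v) ≤ c * (v ⬝ᵥ v) := by
  set U : Matrix ι ι ℝ := (hA.eigenvectorUnitary : Matrix ι ι ℝ)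
  have hUU : U * Uᵀ = 1 := Unitary.coe_mul_star_self hA.eigenvectorUnitary
  set y := Uᵀ *ᵥ v
  have hAv : A *ᵥ v = U *ᵥ (diagonal hA.eigenvalues *ᵥ y) := by
    rw [mulVec_mulVec, mulVec_mulVec]
    exact congrArg (· *ᵥ v) hA.eq_eigenvectorUnitary_mul_diagonal_mul_transpose
  have hquad : v ⬝ᵥ (A *ᵥ v) = ∑ i, hA.eigenvalues i * y i ^ 2 := by
    rw [hAv, dotProduct_mulVec, ← mulVec_transpose]
    simp only [dotProduct, mulVec_diagonal, sq]
    exact sum_congr rfl fun i _ => by ring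
  have hnorm : v ⬝ᵥ v = ∑ i, y i ^ 2 := by
    have hyy : y ⬝ᵥ y = v ⬝ᵥ v := by
      rw [dotProduct_mulVec, vecMul_transpose, mulVec_mulVec, hUU, one_mulVec, dotProduct_comm]
    rw [← hyy]
    simp only [dotProduct, sq]
  rw [hquad, hnorm, mul_sum]
  exact sum_le_sum fun i _ => mul_le_mul_of_nonneg_right (hc i) (sq_nonneg _)

end Matrix.IsHermitian

lemma add_sqrt_mul_sub_sq_le {c t L M : ℝ} (hc : 0 < c) (ht : 0 ≤ t) (htL : t ≤ L)
    (hLM : L ^ 2 ≤ M) (hMt : M ≤ (c + 1) * t ^ 2) :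
    L + √(c * (M - L ^ 2)) ≤ t + √(c * (M - t ^ 2)) := by
  have htL2 : t ^ 2 ≤ L ^ 2 := pow_le_pow_left₀ ht htL 2
  set a := √(c * (M - t ^ 2))
  set b := √(c * (M - L ^ 2))
  have ha : 0 ≤ a := Real.sqrt_nonneg _
  have hb : 0 ≤ b := Real.sqrt_nonneg _
  have ha2 : a ^ 2 = c * (M - t ^ 2) := Real.sq_sqrt (by nlinarith)
  have hb2 : b ^ 2 = c * (M - L ^ 2) := Real.sq_sqrt (by nlinarith)
  have hba : b ≤ a := Real.sqrt_le_sqrt (by nlinarith)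
  have hat : a ≤ c * t := Real.sqrt_le_iff.mpr ⟨by positivity, by nlinarith⟩
  have hsum : a + b ≤ c * (L + t) := by nlinarith
  have key : (L - t) * (a + b) ≤ (a - b) * (a + b) :=
    calc (L - t) * (a + b) ≤ (L - t) * (c * (L + t)) :=
          mul_le_mul_of_nonneg_left hsum (sub_nonneg.mpr htL)
      _ = (a - b) * (a + b) := by linear_combination hb2 - ha2
  rcases (add_nonneg ha hb).eq_or_lt with hab | hab
  · have hLt : L ^ 2 = t ^ 2 := by nlinarith
    nlinarith
  · linarith [le_of_mul_le_mul_right key hab]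

lemma sum_abs_le_abs_add_sqrt {ι : Type*} [Fintype ι] [DecidableEq ι] (f : ι → ℝ) (i₀ : ι) :
    ∑ i, |f i| ≤ |f i₀| + √((Fintype.card ι - 1) * (∑ i, f i ^ 2 - f i₀ ^ 2)) := by
  have hcard : ((univ.erase i₀).card : ℝ) = Fintype.card ι - 1 := by
    rw [card_erase_of_mem (mem_univ i₀), card_univ, Nat.cast_pred (Fintype.card_pos_iff.mpr ⟨i₀⟩)]
  rw [← add_sum_erase _ _ (mem_univ i₀), ← add_sum_erase _ (fun i => f i ^ 2) (mem_univ i₀),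
    add_sub_cancel_left, ← hcard]
  gcongr
  refine Real.le_sqrt_of_sq_le ?_
  calc (∑ i ∈ univ.erase i₀, |f i|) ^ 2
      ≤ (univ.erase i₀).card * ∑ i ∈ univ.erase i₀, |f i| ^ 2 := sq_sum_le_card_mul_sum_sq
    _ = _ := by simp only [sq_abs]

namespace SimpleGraph

lemma Preconnected.card_le_two_mul_card_edgeFinset {V : Type*} [Fintype V] [Nontrivial V]
    {G : SimpleGraph V} [DecidableRel G.Adj] (hG : G.Preconnected) :
    Fintype.card V ≤ 2 * #G.edgeFinset := by
  rw [← sum_degrees_eq_twice_card_edges, ← card_univ, card_eq_sum_ones]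
  exact sum_le_sum fun v _ => hG.degree_pos_of_nontrivial v

variable {V : Type*} [Fintype V] [DecidableEq V] (G : SimpleGraph V) [DecidableRel G.Adj]

lemma sum_sq_eigenvalues_adjMatrix (hA : (G.adjMatrix ℝ).IsHermitian) :
    ∑ i, hA.eigenvalues i ^ 2 = 2 * #G.edgeFinset := by
  rw [hA.sum_sq_eigenvalues, trace]
  simp only [diag_apply, adjMatrix_mul_self_apply_self]
  exact_mod_cast G.sum_degrees_eq_twice_card_edges

lemma two_mul_card_edgeFinset_le_mul_card (hA : (G.adjMatrix ℝ).IsHermitian) {c : ℝ}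
    (hc : ∀ i, hA.eigenvalues i ≤ c) : 2 * #G.edgeFinset ≤ c * Fintype.card V := by
  have h := hA.dotProduct_mulVec_le hc (Function.const V 1)
  simp only [dotProduct, adjMatrix_mulVec_const_apply, Function.const_apply, mul_one, one_mul,
    sum_const, card_univ, nsmul_eq_mul] at h
  rwa [← Nat.cast_sum, sum_degrees_eq_twice_card_edges, Nat.cast_mul, Nat.cast_two] at h

end SimpleGraph

theorem stmt_8 {n : ℕ} (hn : 3 ≤ n) (G : SimpleGraph (Fin n)) [DecidableRel G.Adj]
    (hG : G.Connected) :
    adjEnergy G ≤ 2 * (G.edgeFinset.card : ℝ) / n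
      + Real.sqrt (((n : ℝ) - 1) * (2 * (G.edgeFinset.card : ℝ) - (2 * (G.edgeFinset.card : ℝ) / n) ^ 2)) := by
  set m : ℝ := (#G.edgeFinset : ℝ)
  set eig := (adjMatrix_isHermitian G).eigenvalues
  have : Nontrivial (Fin n) := Fin.nontrivial_iff_two_le.mpr (by omega)
  have hn1 : (1 : ℝ) < n := by exact_mod_cast (by omega : 1 < n)
  obtain ⟨i₀, hmax⟩ : ∃ i₀, ∀ i, eig i ≤ eig i₀ := Finite.exists_max eig
  have hsq : ∑ i, eig i ^ 2 = 2 * m := G.sum_sq_eigenvalues_adjMatrix _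
  have hnm : (n : ℝ) ≤ 2 * m := by
    simpa using (Nat.cast_le (α := ℝ)).mpr hG.preconnected.card_le_two_mul_card_edgeFinset
  have hmax_ge : 2 * m / n ≤ eig i₀ := by
    rw [div_le_iff₀ (by linarith)]
    simpa using G.two_mul_card_edgeFinset_le_mul_card _ hmax
  have hmax_sq : eig i₀ ^ 2 ≤ 2 * m :=
    hsq ▸ single_le_sum (fun i _ => sq_nonneg (eig i)) (mem_univ i₀)
  have hmean : 1 ≤ 2 * m / n := (one_le_div (by linarith)).mpr hnm
  calc adjEnergy G ≤ |eig i₀| + √((n - 1) * (2 * m - eig i₀ ^ 2)) := by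
        simpa [adjEnergy, hsq] using sum_abs_le_abs_add_sqrt eig i₀
    _ ≤ 2 * m / n + √((n - 1) * (2 * m - (2 * m / n) ^ 2)) := by
        rw [abs_of_nonneg (by linarith)]
        refine add_sqrt_mul_sub_sq_le (by linarith) (by linarith) hmax_ge hmax_sq ?_
        rw [sub_add_cancel, sq, ← mul_assoc, mul_div_cancel₀ _ (by linarith)]
        nlinarith
end

section
/- Let G be a connected simple graph on n ≥ 3 vertices, let e be an edge of G, and let G′ = G − e be the graph obtained from G by deleting the edge e. If 1/2 ≤ α < 1, then for every 1 ≤ i ≤ n the i-th largest eigenvalue of A_α(G) is at least the i-th largest eigenvalue of A_α(G′); that is, ρ_i(G) ≥ ρ_i(G′). -/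
/-!
For `α ≥ 1/2` the quadratic form of `A_α(G)` is a sum over the edges `uv` of
`α (x_u² + x_v²) + 2 (1 - α) x_u x_v = (x_u + x_v)² / 2 + (α - 1/2) (x_u - x_v)² ≥ 0`,
so deleting an edge can only decrease `A_α` in the Loewner order. Eigenvalues are monotone in
that order (Weyl): the span of the top `i` eigenvectors of `A_α(G - e)` and the span of the
bottom `n - i + 1` eigenvectors of `A_α(G)` meet in some `x ≠ 0`, and then
`ρ_i(G - e) ‖x‖² ≤ xᵀ A_α(G - e) x ≤ xᵀ A_α(G) x ≤ ρ_i(G) ‖x‖²`.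
-/

open Matrix Finset

open scoped RealInnerProductSpace MatrixOrder

namespace Matrix.IsHermitian

variable {ι : Type*} [Fintype ι] [DecidableEq ι] {A : Matrix ι ι ℝ}

lemma toEuclideanLin_eigenvectorBasis (hA : A.IsHermitian) (j : ι) :
    toEuclideanLin A (hA.eigenvectorBasis j) = hA.eigenvalues j • hA.eigenvectorBasis j := by
  ext i
  simpa using congrFun (hA.mulVec_eigenvectorBasis j) i

lemma inner_toEuclideanLin_self (hA : A.IsHermitian) (x : EuclideanSpace ℝ ι) :
    ⟪x, toEuclideanLin A x⟫ = ∑ j, hA.eigenvalues j * ⟪hA.eigenvectorBasis j, x⟫ ^ 2 := by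
  have hAx : toEuclideanLin A x = ∑ j, ⟪hA.eigenvectorBasis j, x⟫ • hA.eigenvalues j •
      hA.eigenvectorBasis j := by
    conv_lhs => rw [← hA.eigenvectorBasis.sum_repr' x]
    simp only [map_sum, map_smul, toEuclideanLin_eigenvectorBasis]
  simp only [hAx, inner_sum, inner_smul_right, real_inner_comm x]
  exact sum_congr rfl fun j _ => by ring

lemma inner_eigenvectorBasis_eq_zero (hA : A.IsHermitian) {s : Set ι} {x : EuclideanSpace ℝ ι}
    (hx : x ∈ Submodule.span ℝ (hA.eigenvectorBasis '' s)) {j : ι} (hj : j ∉ s) :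
    ⟪hA.eigenvectorBasis j, x⟫ = 0 := by
  suffices Submodule.span ℝ (hA.eigenvectorBasis '' s) ≤
      LinearMap.ker (innerₛₗ ℝ (hA.eigenvectorBasis j)) from this hx
  rw [Submodule.span_le]
  rintro _ ⟨k, hk, rfl⟩
  have hjk : j ≠ k := by rintro rfl; exact hj hk
  simpa using hA.eigenvectorBasis.orthonormal.inner_eq_zero hjk

lemma mul_norm_sq_le_inner_toEuclideanLin_self (hA : A.IsHermitian) {r : ℝ}
    {s : Set ι} (hs : ∀ j ∈ s, r ≤ hA.eigenvalues j) {x : EuclideanSpace ℝ ι}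
    (hx : x ∈ Submodule.span ℝ (hA.eigenvectorBasis '' s)) :
    r * ‖x‖ ^ 2 ≤ ⟪x, toEuclideanLin A x⟫ := by
  rw [hA.inner_toEuclideanLin_self, ← hA.eigenvectorBasis.sum_sq_inner_right, mul_sum]
  refine sum_le_sum fun j _ => ?_
  by_cases hj : j ∈ s
  · exact mul_le_mul_of_nonneg_right (hs j hj) (sq_nonneg _)
  · simp [hA.inner_eigenvectorBasis_eq_zero hx hj]

lemma inner_toEuclideanLin_self_le_mul_norm_sq (hA : A.IsHermitian) {r : ℝ}
    {s : Set ι} (hs : ∀ j ∈ s, hA.eigenvalues j ≤ r) {x : EuclideanSpace ℝ ι}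
    (hx : x ∈ Submodule.span ℝ (hA.eigenvectorBasis '' s)) :
    ⟪x, toEuclideanLin A x⟫ ≤ r * ‖x‖ ^ 2 := by
  rw [hA.inner_toEuclideanLin_self, ← hA.eigenvectorBasis.sum_sq_inner_right, mul_sum]
  refine sum_le_sum fun j _ => ?_
  by_cases hj : j ∈ s
  · exact mul_le_mul_of_nonneg_right (hs j hj) (sq_nonneg _)
  · simp [hA.inner_eigenvectorBasis_eq_zero hx hj]

lemma finrank_span_eigenvectorBasis_image (hA : A.IsHermitian) (s : Finset ι) :
    Module.finrank ℝ (Submodule.span ℝ (hA.eigenvectorBasis '' s)) = s.card := by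
  rw [Set.image_eq_range, finrank_span_eq_card]
  · simp
  · exact hA.eigenvectorBasis.orthonormal.linearIndependent.comp _ Subtype.val_injective

end Matrix.IsHermitian

lemma Matrix.inner_toEuclideanLin_self_le_of_le {ι : Type*} [Fintype ι] [DecidableEq ι]
    {A B : Matrix ι ι ℝ} (hAB : A ≤ B) (x : EuclideanSpace ℝ ι) :
    ⟪x, toEuclideanLin A x⟫ ≤ ⟪x, toEuclideanLin B x⟫ := by
  have := (Matrix.isPositive_toEuclideanLin_iff.2 (Matrix.le_iff.1 hAB)).inner_nonneg_right x
  rw [map_sub, LinearMap.sub_apply, inner_sub_right] at this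
  linarith

lemma Finset.card_filter_le_add_card_filter_ge {κ : Type*} [Fintype κ] [LinearOrder κ] (i : κ) :
    #({j | j ≤ i} : Finset κ) + #({j | i ≤ j} : Finset κ) = Fintype.card κ + 1 := by
  rw [← card_union_add_card_inter, ← filter_or, ← filter_and]
  have h1 : univ.filter (fun j => j ≤ i ∨ i ≤ j) = univ :=
    filter_true_of_mem fun j _ => le_total j i
  have h2 : univ.filter (fun j => j ≤ i ∧ i ≤ j) = {i} := by ext j; simp [le_antisymm_iff]
  rw [h1, h2, card_univ, card_singleton]

theorem Matrix.IsHermitian.eigenvalues_le_of_le {ι κ : Type*} [Fintype ι] [DecidableEq ι]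
    [Fintype κ] [LinearOrder κ] {A B : Matrix ι ι ℝ} (hA : A.IsHermitian) (hB : B.IsHermitian)
    (hAB : A ≤ B) {σ τ : κ ≃ ι} (hσ : Antitone (hA.eigenvalues ∘ σ))
    (hτ : Antitone (hB.eigenvalues ∘ τ)) (i : κ) :
    hA.eigenvalues (σ i) ≤ hB.eigenvalues (τ i) := by
  set V := Submodule.span ℝ (hA.eigenvectorBasis ''
    ↑({j | hA.eigenvalues (σ i) ≤ hA.eigenvalues j} : Finset ι))
  set W := Submodule.span ℝ (hB.eigenvectorBasis ''
    ↑({j | hB.eigenvalues j ≤ hB.eigenvalues (τ i)} : Finset ι))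
  have hV : #({j | j ≤ i} : Finset κ) ≤ Module.finrank ℝ V := by
    rw [hA.finrank_span_eigenvectorBasis_image]
    exact card_le_card_of_injOn σ (fun j hj => by simpa using hσ (by simpa using hj))
      σ.injective.injOn
  have hW : #({j | i ≤ j} : Finset κ) ≤ Module.finrank ℝ W := by
    rw [hB.finrank_span_eigenvectorBasis_image]
    exact card_le_card_of_injOn τ (fun j hj => by simpa using hτ (by simpa using hj))
      τ.injective.injOn
  have hVW : ¬ Disjoint V W := fun hdisj => by
    have := Submodule.finrank_add_finrank_le_of_disjoint hdisj
    rw [finrank_euclideanSpace, ← Fintype.card_congr σ] at this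
    have := card_filter_le_add_card_filter_ge i
    omega
  obtain ⟨x, hxV, hxW, hx⟩ : ∃ x ∈ V, x ∈ W ∧ x ≠ 0 := by
    simpa [Submodule.disjoint_def] using hVW
  have hx2 : 0 < ‖x‖ ^ 2 := by positivity
  refine le_of_mul_le_mul_right ?_ hx2
  calc hA.eigenvalues (σ i) * ‖x‖ ^ 2 ≤ ⟪x, toEuclideanLin A x⟫ :=
        hA.mul_norm_sq_le_inner_toEuclideanLin_self (by simp) hxV
    _ ≤ ⟪x, toEuclideanLin B x⟫ := Matrix.inner_toEuclideanLin_self_le_of_le hAB x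
    _ ≤ hB.eigenvalues (τ i) * ‖x‖ ^ 2 :=
        hB.inner_toEuclideanLin_self_le_mul_norm_sq (by simp) hxW

namespace SimpleGraph

variable {n : ℕ}

lemma two_mul_dotProduct_mulVec_alphaMatrix (G : SimpleGraph (Fin n)) [DecidableRel G.Adj]
    (α : ℝ) (x : Fin n → ℝ) :
    2 * (x ⬝ᵥ (alphaMatrix G α *ᵥ x)) =
      ∑ i, ∑ j,
        if G.Adj i j then α * (x i ^ 2 + x j ^ 2) + 2 * (1 - α) * (x i * x j) else 0 := by
  have hform : x ⬝ᵥ (alphaMatrix G α *ᵥ x) =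
      ∑ i, ∑ j, if G.Adj i j then α * x i ^ 2 + (1 - α) * (x i * x j) else 0 := by
    have hdeg : Matrix.diagonal (fun v => (G.degree v : ℝ)) = G.degMatrix ℝ := rfl
    rw [alphaMatrix, hdeg, add_mulVec, smul_mulVec, smul_mulVec, dotProduct_add, dotProduct_smul,
      dotProduct_smul, dotProduct_mulVec_degMatrix, dotProduct_mulVec_adjMatrix]
    simp only [G.degree_eq_sum_if_adj, sum_mul, smul_eq_mul, mul_sum, ← sum_add_distrib]
    refine sum_congr rfl fun i _ => sum_congr rfl fun j _ => ?_
    split_ifs <;> ring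
  have hswap : x ⬝ᵥ (alphaMatrix G α *ᵥ x) =
      ∑ i, ∑ j, if G.Adj i j then α * x j ^ 2 + (1 - α) * (x i * x j) else 0 := by
    rw [hform, sum_comm]
    simp_rw [G.adj_comm, mul_comm (x _) (x _)]
  rw [two_mul]
  nth_rewrite 1 [hform]
  rw [hswap, ← sum_add_distrib]
  refine sum_congr rfl fun i _ => ?_
  rw [← sum_add_distrib]
  refine sum_congr rfl fun j _ => ?_
  split_ifs <;> ring

lemma alphaMatrix_le_alphaMatrix_of_le {H G : SimpleGraph (Fin n)} [DecidableRel H.Adj]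
    [DecidableRel G.Adj] (hHG : H ≤ G) {α : ℝ} (hα : 1 / 2 ≤ α) :
    alphaMatrix H α ≤ alphaMatrix G α := by
  rw [Matrix.le_iff, posSemidef_iff_dotProduct_mulVec]
  refine ⟨(alphaMatrix_isHermitian G α).sub (alphaMatrix_isHermitian H α), fun x => ?_⟩
  rw [star_trivial, sub_mulVec, dotProduct_sub, sub_nonneg, ← mul_le_mul_iff_right₀ two_pos,
    two_mul_dotProduct_mulVec_alphaMatrix, two_mul_dotProduct_mulVec_alphaMatrix]
  have hedge (a b : ℝ) : 0 ≤ α * (a ^ 2 + b ^ 2) + 2 * (1 - α) * (a * b) := by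
    nlinarith [sq_nonneg (a + b), mul_nonneg (sub_nonneg.2 hα) (sq_nonneg (a - b))]
  gcongr with i _ j _
  split_ifs with hH hG
  · rfl
  · exact absurd (hHG hH) hG
  · exact hedge _ _
  · rfl

end SimpleGraph

theorem stmt_10_general {n : ℕ} (G G' : SimpleGraph (Fin n))
    [DecidableRel G.Adj] [DecidableRel G'.Adj]
    (e : Sym2 (Fin n))
    (hG' : G' = G.deleteEdges {e})
    (α : ℝ) (hα0 : 1 / 2 ≤ α)
    (ρ ρ' : Fin n → ℝ) (hρa : Antitone ρ) (hρ'a : Antitone ρ')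
    (hρ : ∃ σ : Equiv.Perm (Fin n), ρ = (alphaMatrix_isHermitian G α).eigenvalues ∘ σ)
    (hρ' : ∃ σ : Equiv.Perm (Fin n), ρ' = (alphaMatrix_isHermitian G' α).eigenvalues ∘ σ) :
    ∀ i : Fin n, ρ' i ≤ ρ i := by
  obtain ⟨σ, rfl⟩ := hρ
  obtain ⟨σ', rfl⟩ := hρ'
  have hG'G : G' ≤ G := hG' ▸ G.deleteEdges_le {e}
  exact (alphaMatrix_isHermitian G' α).eigenvalues_le_of_le (alphaMatrix_isHermitian G α)
    (SimpleGraph.alphaMatrix_le_alphaMatrix_of_le hG'G hα0) hρ'a hρa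

theorem stmt_10 {n : ℕ} (hn : 3 ≤ n) (G G' : SimpleGraph (Fin n))
    [DecidableRel G.Adj] [DecidableRel G'.Adj]
    (hG : G.Connected) (e : Sym2 (Fin n)) (he : e ∈ G.edgeSet)
    (hG' : G' = G.deleteEdges {e})
    (α : ℝ) (hα0 : 1 / 2 ≤ α) (hα1 : α < 1)
    (ρ ρ' : Fin n → ℝ) (hρa : Antitone ρ) (hρ'a : Antitone ρ')
    (hρ : ∃ σ : Equiv.Perm (Fin n), ρ = (alphaMatrix_isHermitian G α).eigenvalues ∘ σ)
    (hρ' : ∃ σ : Equiv.Perm (Fin n), ρ' = (alphaMatrix_isHermitian G' α).eigenvalues ∘ σ) :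
    ∀ i : Fin n, ρ' i ≤ ρ i :=
  stmt_10_general G G' e hG' α hα0 ρ ρ' hρa hρ'a hρ hρ'
end

section
/- Let G be a connected simple graph on n ≥ 3 vertices with m edges, let 1/2 ≤ α < 1, and let η be the number of eigenvalues ρ_i of A_α(G) with ρ_i ≥ 2αm/n. Then E^{A_α}(G) ≤ 2(n−1) + 2(η−1)(αn−1) − 4αηm/n, with equality if and only if G is the complete graph K_n. -/
open Matrix Finset

/-!
For `1 / 2 ≤ α` the matrix `A_α(H)` of any graph `H` is positive semidefinite, and
`A_α(G) + A_α(Gᶜ) = (α n - 1) I + (1 - α) J`. Hence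
`xᵀ A_α(G) x ≤ (α n - 1) ‖x‖² + (1 - α) (∑ x)²`. With Cauchy–Schwarz this gives
`ρ_i ≤ n - 1`, where equality forces a constant eigenvector and an edgeless complement; on the
hyperplane `∑ x = 0` it shows that at most one eigenvalue exceeds `α n - 1`.

The deviations `ρ_i - 2αm/n` sum to zero (trace), so the energy is twice the sum of the `η`
nonnegative ones. Bounding the largest of them by `n - 1 - 2αm/n` and the others by
`α n - 1 - 2αm/n` gives the inequality, strict unless `G = K_n`. For `K_n` the all-ones
eigenvector gives the eigenvalue `n - 1`, the only one that is at least `2αm/n = α (n - 1)`.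
-/

namespace Finset

variable {ι : Type*}

theorem sum_abs_sub_eq_two_mul_sum_filter (s : Finset ι) (f : ι → ℝ) {c : ℝ}
    (hs : ∑ i ∈ s, (f i - c) = 0) :
    ∑ i ∈ s, |f i - c| = 2 * ∑ i ∈ s with c ≤ f i, (f i - c) := by
  have hpos : ∑ i ∈ s with c ≤ f i, |f i - c| = ∑ i ∈ s with c ≤ f i, (f i - c) :=
    sum_congr rfl fun i hi => abs_of_nonneg (sub_nonneg.2 (mem_filter.1 hi).2)
  have hneg :
      ∑ i ∈ s with ¬c ≤ f i, |f i - c| = -∑ i ∈ s with ¬c ≤ f i, (f i - c) := by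
    rw [← sum_neg_distrib]
    exact sum_congr rfl fun i hi => abs_of_neg (sub_neg.2 (not_le.1 (mem_filter.1 hi).2))
  have hsplit := sum_filter_add_sum_filter_not s (fun i => c ≤ f i) fun i => f i - c
  rw [← sum_filter_add_sum_filter_not s (fun i => c ≤ f i), hpos, hneg]
  linarith

theorem nonempty_filter_le_of_sum_sub_eq_zero {s : Finset ι} (hs : s.Nonempty) {f : ι → ℝ}
    {c : ℝ} (h : ∑ i ∈ s, (f i - c) = 0) : (s.filter (c ≤ f ·)).Nonempty := by
  obtain ⟨i, hi, hci⟩ := exists_le_of_sum_le hs (f := fun _ => c) (g := f)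
    (by rw [← sub_nonneg, ← sum_sub_distrib, h])
  exact ⟨i, mem_filter.2 ⟨hi, hci⟩⟩

theorem exists_mem_sum_le_add_card_sub_one_mul {s : Finset ι} (hs : s.Nonempty) {f : ι → ℝ}
    {b : ℝ} (hf : ∀ i ∈ s, ∀ j ∈ s, b < f i → b < f j → i = j) :
    ∃ i ∈ s, ∑ j ∈ s, f j ≤ f i + (#s - 1) * b := by
  classical
  obtain ⟨i, hi, hmax⟩ := s.exists_max_image f hs
  refine ⟨i, hi, ?_⟩
  have hle : ∀ j ∈ s.erase i, f j ≤ b := fun j hj => by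
    obtain ⟨hji, hj⟩ := mem_erase.1 hj
    by_contra! hbj
    exact hji (hf j hj i hi hbj (hbj.trans_le (hmax j hj)))
  calc ∑ j ∈ s, f j = f i + ∑ j ∈ s.erase i, f j := (add_sum_erase s f hi).symm
    _ ≤ f i + #(s.erase i) • b := by grw [sum_le_card_nsmul _ _ _ hle]
    _ = f i + (#s - 1) * b := by
      rw [card_erase_of_mem hi, nsmul_eq_mul, Nat.cast_sub (card_pos.2 hs), Nat.cast_one]

end Finset

section CauchySchwarz

variable {ι : Type*} [Fintype ι]

theorem sq_sum_le_card_mul_dotProduct_self (x : ι → ℝ) :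
    (∑ i, x i) ^ 2 ≤ Fintype.card ι * (x ⬝ᵥ x) := by
  simpa [dotProduct, sq] using sq_sum_le_card_mul_sum_sq (s := Finset.univ) (f := x)

theorem eq_of_sq_sum_eq_card_mul_dotProduct_self {x : ι → ℝ}
    (h : (∑ i, x i) ^ 2 = Fintype.card ι * (x ⬝ᵥ x)) (i j : ι) : x i = x j := by
  have hn : (Fintype.card ι : ℝ) ≠ 0 := by positivity [Fintype.card_pos_iff.2 ⟨i⟩]
  have hzero : ∑ k, (Fintype.card ι * x k - ∑ l, x l) ^ 2 = 0 := by
    simp only [dotProduct, ← sq] at h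
    simp only [sub_sq, Finset.sum_add_distrib, Finset.sum_sub_distrib, mul_pow, ← Finset.mul_sum,
      ← Finset.sum_mul, Finset.sum_const, Finset.card_univ, nsmul_eq_mul]
    linear_combination (-(Fintype.card ι : ℝ)) * h
  have hconst : ∀ k, Fintype.card ι * x k = ∑ l, x l := fun k => by
    have := (Finset.sum_eq_zero_iff_of_nonneg fun k _ => sq_nonneg _).1 hzero k (Finset.mem_univ k)
    exact sub_eq_zero.1 (pow_eq_zero_iff two_ne_zero |>.1 this)
  exact mul_left_cancel₀ hn ((hconst i).trans (hconst j).symm)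

end CauchySchwarz

namespace Matrix.IsHermitian

variable {ι : Type*} [Fintype ι] [DecidableEq ι] {A : Matrix ι ι ℝ}

theorem eigenvectorBasis_dotProduct (hA : A.IsHermitian) (i j : ι) :
    ⇑(hA.eigenvectorBasis i) ⬝ᵥ ⇑(hA.eigenvectorBasis j) = if i = j then 1 else 0 := by
  rw [← orthonormal_iff_ite.1 hA.eigenvectorBasis.orthonormal i j,
    EuclideanSpace.inner_eq_star_dotProduct, star_trivial, dotProduct_comm]

theorem dotProduct_mulVec_eigenvectorBasis (hA : A.IsHermitian) (i : ι) :
    ⇑(hA.eigenvectorBasis i) ⬝ᵥ A *ᵥ ⇑(hA.eigenvectorBasis i) = hA.eigenvalues i := by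
  simp [hA.mulVec_eigenvectorBasis, hA.eigenvectorBasis_dotProduct]

theorem eigenvalues_le_of_dotProduct_mulVec_le (hA : A.IsHermitian) {M : ℝ}
    (hM : ∀ x, x ⬝ᵥ A *ᵥ x ≤ M * (x ⬝ᵥ x)) (i : ι) : hA.eigenvalues i ≤ M := by
  simpa [hA.dotProduct_mulVec_eigenvectorBasis, hA.eigenvectorBasis_dotProduct] using
    hM (hA.eigenvectorBasis i)

theorem eq_of_lt_eigenvalues_of_dotProduct_mulVec_le (hA : A.IsHermitian) (w : ι → ℝ) {b : ℝ}
    (hb : ∀ x, w ⬝ᵥ x = 0 → x ⬝ᵥ A *ᵥ x ≤ b * (x ⬝ᵥ x)) {i j : ι}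
    (hi : b < hA.eigenvalues i) (hj : b < hA.eigenvalues j) : i = j := by
  by_contra hij
  set u := ⇑(hA.eigenvectorBasis i)
  set v := ⇑(hA.eigenvectorBasis j)
  -- some nonzero `p • u + q • v` is orthogonal to `w`, yet its Rayleigh quotient exceeds `b`
  obtain ⟨p, q, hpq, hw⟩ :
      ∃ p q : ℝ, (p, q) ≠ 0 ∧ p * (w ⬝ᵥ u) + q * (w ⬝ᵥ v) = 0 := by
    by_cases h : (w ⬝ᵥ v, -(w ⬝ᵥ u)) = 0
    · exact ⟨1, 0, by simp, by simp_all⟩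
    · exact ⟨_, _, h, by ring⟩
  have huv : u ⬝ᵥ v = 0 := by simpa [hij] using hA.eigenvectorBasis_dotProduct i j
  have huu : u ⬝ᵥ u = 1 := by simpa using hA.eigenvectorBasis_dotProduct i i
  have hvv : v ⬝ᵥ v = 1 := by simpa using hA.eigenvectorBasis_dotProduct j j
  have hAu : A *ᵥ u = hA.eigenvalues i • u := hA.mulVec_eigenvectorBasis i
  have hAv : A *ᵥ v = hA.eigenvalues j • v := hA.mulVec_eigenvectorBasis j
  clear_value u v
  have hx := hb (p • u + q • v) (by simpa [dotProduct_add] using hw)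
  simp only [mulVec_add, mulVec_smul, hAu, hAv, add_dotProduct, dotProduct_add, smul_dotProduct,
    dotProduct_smul, huu, hvv, huv, dotProduct_comm v u, smul_eq_mul] at hx
  have hpos : 0 < p ^ 2 * (hA.eigenvalues i - b) + q ^ 2 * (hA.eigenvalues j - b) := by
    have := sub_pos.2 hi
    have := sub_pos.2 hj
    rcases eq_or_ne p 0 with rfl | hp
    · have hq : q ≠ 0 := fun hq => hpq (by simp [hq])
      positivity
    · positivity
  nlinarith

theorem exists_eigenvalues_eq_of_mulVec_eq_smul (hA : A.IsHermitian) {v : ι → ℝ} {μ : ℝ}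
    (hv : v ≠ 0) (h : A *ᵥ v = μ • v) : ∃ i, hA.eigenvalues i = μ := by
  have : μ ∈ spectrum ℝ A := by
    rw [← spectrum_toLin']
    exact Module.End.HasEigenvalue.mem_spectrum <| Module.End.hasEigenvalue_of_hasEigenvector
      ⟨Module.End.mem_eigenspace_iff.2 (by simpa using h), hv⟩
  simpa [hA.spectrum_real_eq_range_eigenvalues] using this

end Matrix.IsHermitian

namespace SimpleGraph

variable {n : ℕ} (G : SimpleGraph (Fin n)) [DecidableRel G.Adj]

theorem sum_cast_degrees_eq_twice_card_edges : ∑ v, (G.degree v : ℝ) = 2 * #G.edgeFinset := by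
  exact_mod_cast G.sum_degrees_eq_twice_card_edges

theorem alphaMatrix_add_alphaMatrix_compl (α : ℝ) :
    alphaMatrix G α + alphaMatrix Gᶜ α =
      (α * n - 1) • (1 : Matrix (Fin n) (Fin n) ℝ) + (1 - α) • of fun _ _ => 1 := by
  ext v w
  have hdeg : (G.degree v + Gᶜ.degree v : ℝ) = n - 1 := by
    rw [degree_compl, Fintype.card_fin]
    have := G.degree_lt_card_verts v
    rw [Fintype.card_fin] at this
    push_cast [Nat.cast_sub (by omega : 1 ≤ n), Nat.cast_sub (Nat.le_sub_one_of_lt this)]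
    ring
  rcases eq_or_ne v w with rfl | hvw
  · simp only [alphaMatrix, Matrix.add_apply, Matrix.smul_apply, diagonal_apply_eq, smul_eq_mul,
      adjMatrix_apply, SimpleGraph.irrefl, ↓reduceIte, mul_zero, add_zero, smul_of, one_apply_eq,
      mul_one, of_apply, Pi.smul_apply, sub_add_sub_cancel]
    linear_combination α * hdeg
  · by_cases h : G.Adj v w <;> simp [alphaMatrix, hvw, h, one_apply]

theorem dotProduct_alphaMatrix_mulVec (α : ℝ) (x : Fin n → ℝ) :
    x ⬝ᵥ alphaMatrix G α *ᵥ x =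
      ∑ v, ∑ w, if G.Adj v w then α * x v ^ 2 + (1 - α) * (x v * x w) else 0 := by
  have hdiag : x ⬝ᵥ diagonal (fun v => (G.degree v : ℝ)) *ᵥ x =
      ∑ v, ∑ w, if G.Adj v w then x v ^ 2 else 0 := by
    simp [dotProduct, mulVec_diagonal, Finset.sum_ite, ← neighborFinset_eq_filter, sq,
      mul_left_comm]
  simp only [alphaMatrix, add_mulVec, smul_mulVec, dotProduct_add, dotProduct_smul,
    dotProduct_mulVec_adjMatrix, hdiag, smul_eq_mul, Finset.mul_sum, ← Finset.sum_add_distrib]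
  refine Finset.sum_congr rfl fun v _ => Finset.sum_congr rfl fun w _ => ?_
  split_ifs <;> ring

theorem dotProduct_alphaMatrix_mulVec_nonneg {α : ℝ} (hα : 1 / 2 ≤ α) (x : Fin n → ℝ) :
    0 ≤ x ⬝ᵥ alphaMatrix G α *ᵥ x := by
  have hsymm : x ⬝ᵥ alphaMatrix G α *ᵥ x =
      ∑ v, ∑ w, if G.Adj v w then α * x w ^ 2 + (1 - α) * (x v * x w) else 0 := by
    rw [dotProduct_alphaMatrix_mulVec, Finset.sum_comm]
    simp_rw [G.adj_comm, mul_comm (x _) (x _)]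
  have htwice : 2 * (x ⬝ᵥ alphaMatrix G α *ᵥ x) = ∑ v, ∑ w, if G.Adj v w then
      (x v + x w) ^ 2 / 2 + (2 * α - 1) * (x v - x w) ^ 2 / 2 else 0 := by
    rw [two_mul]
    nth_rw 1 [dotProduct_alphaMatrix_mulVec]
    rw [hsymm, ← Finset.sum_add_distrib]
    refine Finset.sum_congr rfl fun v _ => ?_
    rw [← Finset.sum_add_distrib]
    refine Finset.sum_congr rfl fun w _ => ?_
    split_ifs <;> ring
  have : 0 ≤ 2 * (x ⬝ᵥ alphaMatrix G α *ᵥ x) := by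
    rw [htwice]
    have : 0 ≤ 2 * α - 1 := by linarith
    refine Finset.sum_nonneg fun v _ => Finset.sum_nonneg fun w _ => ?_
    split_ifs <;> positivity
  linarith

theorem alphaMatrix_mulVec_const (α t : ℝ) :
    alphaMatrix G α *ᵥ (fun _ => t) = fun v => G.degree v * t := by
  ext v
  simp only [alphaMatrix, add_mulVec, smul_mulVec, Pi.add_apply, Pi.smul_apply, mulVec_diagonal,
    smul_eq_mul, adjMatrix_mulVec_apply, Finset.sum_const, card_neighborFinset_eq_degree,
    nsmul_eq_mul]
  ring

theorem dotProduct_alphaMatrix_mulVec_const (α t : ℝ) :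
    (fun _ => t) ⬝ᵥ alphaMatrix G α *ᵥ (fun _ => t) = 2 * #G.edgeFinset * t ^ 2 := by
  simp only [alphaMatrix_mulVec_const, dotProduct, ← Finset.sum_mul, ← Finset.mul_sum,
    sum_cast_degrees_eq_twice_card_edges]
  ring

theorem dotProduct_alphaMatrix_mulVec_add_compl (α : ℝ) (x : Fin n → ℝ) :
    x ⬝ᵥ alphaMatrix G α *ᵥ x + x ⬝ᵥ alphaMatrix Gᶜ α *ᵥ x =
      (α * n - 1) * (x ⬝ᵥ x) + (1 - α) * (∑ v, x v) ^ 2 := by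
  rw [← dotProduct_add, ← add_mulVec, alphaMatrix_add_alphaMatrix_compl]
  rw [add_mulVec, smul_mulVec, smul_mulVec, one_mulVec, dotProduct_add, dotProduct_smul,
    dotProduct_smul, smul_eq_mul, smul_eq_mul]
  congr 2
  simp [mulVec, dotProduct, ← Finset.sum_mul, sq]

theorem dotProduct_alphaMatrix_mulVec_le {α : ℝ} (hα : 1 / 2 ≤ α) (x : Fin n → ℝ) :
    x ⬝ᵥ alphaMatrix G α *ᵥ x ≤
      (α * n - 1) * (x ⬝ᵥ x) + (1 - α) * (∑ v, x v) ^ 2 := by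
  linarith [G.dotProduct_alphaMatrix_mulVec_add_compl α x,
    Gᶜ.dotProduct_alphaMatrix_mulVec_nonneg hα x]

theorem eq_top_of_card_sub_one_mul_le_dotProduct_alphaMatrix_mulVec {α : ℝ} (hα0 : 1 / 2 ≤ α)
    (hα1 : α < 1) {x : Fin n → ℝ} (hx : x ≠ 0)
    (h : (n - 1) * (x ⬝ᵥ x) ≤ x ⬝ᵥ alphaMatrix G α *ᵥ x) : G = ⊤ := by
  have hsplit := G.dotProduct_alphaMatrix_mulVec_add_compl α x
  have hcompl := Gᶜ.dotProduct_alphaMatrix_mulVec_nonneg hα0 x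
  have hcs : (∑ v, x v) ^ 2 ≤ n * (x ⬝ᵥ x) := by
    simpa using sq_sum_le_card_mul_dotProduct_self x
  have hcs_eq : (∑ v, x v) ^ 2 = n * (x ⬝ᵥ x) := by nlinarith
  have hcompl_eq : x ⬝ᵥ alphaMatrix Gᶜ α *ᵥ x = 0 := by nlinarith
  obtain ⟨v, hv⟩ : ∃ v, x v ≠ 0 := Function.ne_iff.1 hx
  have hconst : x = fun _ => x v := funext fun w =>
    eq_of_sq_sum_eq_card_mul_dotProduct_self (by simpa using hcs_eq) w v
  rw [hconst, dotProduct_alphaMatrix_mulVec_const] at hcompl_eq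
  simpa [hv] using hcompl_eq

theorem sum_eigenvalues_alphaMatrix (α : ℝ) :
    ∑ i, (alphaMatrix_isHermitian G α).eigenvalues i = 2 * α * #G.edgeFinset := by
  have htrace := (alphaMatrix_isHermitian G α).trace_eq_sum_eigenvalues
  simp only [RCLike.ofReal_real_eq_id, id] at htrace
  rw [← htrace]
  simp only [alphaMatrix, trace_add, trace_smul, trace_diagonal,
    sum_cast_degrees_eq_twice_card_edges, smul_eq_mul, trace_adjMatrix, mul_zero, add_zero]
  ring

theorem sum_eigenvalues_alphaMatrix_sub_eq_zero (hn : n ≠ 0) (α : ℝ) :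
    ∑ i, ((alphaMatrix_isHermitian G α).eigenvalues i - 2 * α * #G.edgeFinset / n) = 0 := by
  rw [Finset.sum_sub_distrib, G.sum_eigenvalues_alphaMatrix, Finset.sum_const, Finset.card_univ,
    Fintype.card_fin, nsmul_eq_mul, mul_div_cancel₀ _ (Nat.cast_ne_zero.2 hn), sub_self]

theorem eigenvalues_alphaMatrix_le {α : ℝ} (hα0 : 1 / 2 ≤ α) (hα1 : α ≤ 1) (i : Fin n) :
    (alphaMatrix_isHermitian G α).eigenvalues i ≤ n - 1 := by
  refine (alphaMatrix_isHermitian G α).eigenvalues_le_of_dotProduct_mulVec_le (fun x => ?_) i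
  have := mul_le_mul_of_nonneg_left (by simpa using sq_sum_le_card_mul_dotProduct_self x :
    (∑ v, x v) ^ 2 ≤ n * (x ⬝ᵥ x)) (sub_nonneg.2 hα1)
  linarith [G.dotProduct_alphaMatrix_mulVec_le hα0 x]

theorem eq_top_of_eigenvalues_alphaMatrix_eq {α : ℝ} (hα0 : 1 / 2 ≤ α) (hα1 : α < 1)
    {i : Fin n} (h : (alphaMatrix_isHermitian G α).eigenvalues i = n - 1) : G = ⊤ := by
  have hA := alphaMatrix_isHermitian G α
  have hunit : ⇑(hA.eigenvectorBasis i) ⬝ᵥ ⇑(hA.eigenvectorBasis i) = 1 := by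
    simpa using hA.eigenvectorBasis_dotProduct i i
  refine G.eq_top_of_card_sub_one_mul_le_dotProduct_alphaMatrix_mulVec hα0 hα1
    (x := ⇑(hA.eigenvectorBasis i)) (fun h0 => by simp [h0] at hunit) ?_
  rw [hunit, hA.dotProduct_mulVec_eigenvectorBasis, h, mul_one]

theorem eq_of_lt_eigenvalues_alphaMatrix {α : ℝ} (hα0 : 1 / 2 ≤ α) {i j : Fin n}
    (hi : α * n - 1 < (alphaMatrix_isHermitian G α).eigenvalues i)
    (hj : α * n - 1 < (alphaMatrix_isHermitian G α).eigenvalues j) : i = j := by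
  refine (alphaMatrix_isHermitian G α).eq_of_lt_eigenvalues_of_dotProduct_mulVec_le
    (fun _ => 1) (fun x hx => ?_) hi hj
  have hx : ∑ v, x v = 0 := by simpa [dotProduct] using hx
  simpa [hx] using G.dotProduct_alphaMatrix_mulVec_le hα0 x

theorem exists_filter_eigenvalues_alphaMatrix_eq_singleton {α : ℝ} (hG : G = ⊤)
    (hα0 : 1 / 2 ≤ α) (hα1 : α < 1) (hn : 0 < n) :
    ∃ i, (alphaMatrix_isHermitian G α).eigenvalues i = n - 1 ∧
      Finset.univ.filter (fun j => 2 * α * #G.edgeFinset / n ≤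
        (alphaMatrix_isHermitian G α).eigenvalues j) = {i} := by
  have hdeg : ∀ v, (G.degree v : ℝ) = n - 1 := fun v => by
    have : G.degree v = n - 1 := by
      simpa using (G.degree_eq_card_sub_one v).2 fun w hvw => hG ▸ hvw
    rw [this, Nat.cast_sub hn, Nat.cast_one]
  have hc : 2 * α * #G.edgeFinset / n = α * (n - 1) := by
    have hsum := G.sum_cast_degrees_eq_twice_card_edges
    simp only [hdeg, Finset.sum_const, Finset.card_univ, Fintype.card_fin, nsmul_eq_mul] at hsum
    rw [div_eq_iff (by positivity)]
    linear_combination (-α) * hsum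
  obtain ⟨i, hi⟩ := (alphaMatrix_isHermitian G α).exists_eigenvalues_eq_of_mulVec_eq_smul
    (v := fun _ => 1) (μ := n - 1) (fun h => by simpa using congrFun h ⟨0, hn⟩)
    (by ext v; simp [alphaMatrix_mulVec_const, hdeg])
  have hcn : α * n - 1 < α * (n - 1) ∧ α * (n - 1) ≤ n - 1 := by
    have : (1 : ℝ) ≤ n := by exact_mod_cast hn
    constructor <;> nlinarith
  refine ⟨i, hi, Finset.ext fun j => ?_⟩
  simp only [Finset.mem_filter, Finset.mem_univ, true_and, Finset.mem_singleton, hc]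
  refine ⟨fun hj => G.eq_of_lt_eigenvalues_alphaMatrix hα0 (by linarith) (by linarith), ?_⟩
  rintro rfl
  linarith

end SimpleGraph

theorem stmt_11_general {n : ℕ} (hn : 3 ≤ n) (G : SimpleGraph (Fin n)) [DecidableRel G.Adj]
    (α : ℝ) (hα0 : 1 / 2 ≤ α) (hα1 : α < 1)
    (η : ℕ)
    (hη : η = (Finset.univ.filter
      (fun i => 2 * α * (G.edgeFinset.card : ℝ) / n ≤ (alphaMatrix_isHermitian G α).eigenvalues i)).card) :
    alphaEnergy G α ≤ 2 * ((n : ℝ) - 1) + 2 * ((η : ℝ) - 1) * (α * n - 1) - 4 * α * η * (G.edgeFinset.card : ℝ) / n ∧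
    (alphaEnergy G α = 2 * ((n : ℝ) - 1) + 2 * ((η : ℝ) - 1) * (α * n - 1) - 4 * α * η * (G.edgeFinset.card : ℝ) / n ↔ G = ⊤) := by
  set ρ := (alphaMatrix_isHermitian G α).eigenvalues
  set c := 2 * α * (#G.edgeFinset : ℝ) / n
  have hdev : ∑ i, (ρ i - c) = 0 := G.sum_eigenvalues_alphaMatrix_sub_eq_zero (by omega) α
  have henergy : alphaEnergy G α = 2 * ∑ i with c ≤ ρ i, (ρ i - c) :=
    Finset.sum_abs_sub_eq_two_mul_sum_filter _ _ hdev
  have hbound :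
      2 * ((n : ℝ) - 1) + 2 * ((η : ℝ) - 1) * (α * n - 1) - 4 * α * η * #G.edgeFinset / n =
        2 * ((n - 1 - c) + (η - 1) * (α * n - 1 - c)) := by
    simp only [c]; field_simp; ring
  rw [hbound, henergy]
  have hS := Finset.nonempty_filter_le_of_sum_sub_eq_zero ⟨⟨0, by omega⟩, Finset.mem_univ _⟩ hdev
  obtain ⟨i, -, hsum⟩ := Finset.exists_mem_sum_le_add_card_sub_one_mul hS
    (f := fun j => ρ j - c) (b := α * n - 1 - c)
    fun j _ k _ hj hk => G.eq_of_lt_eigenvalues_alphaMatrix hα0 (by linarith) (by linarith)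
  rw [← hη] at hsum
  have hρi := G.eigenvalues_alphaMatrix_le hα0 hα1.le i
  refine ⟨by linarith, fun heq => G.eq_top_of_eigenvalues_alphaMatrix_eq hα0 hα1 (i := i)
    (by linarith), fun hG => ?_⟩
  obtain ⟨i₀, hi₀, hS₀⟩ :=
    G.exists_filter_eigenvalues_alphaMatrix_eq_singleton hG hα0 hα1 (by omega)
  rw [hS₀, Finset.card_singleton] at hη
  rw [hS₀, Finset.sum_singleton, hη]
  linear_combination (2 : ℝ) * hi₀

theorem stmt_11 {n : ℕ} (hn : 3 ≤ n) (G : SimpleGraph (Fin n)) [DecidableRel G.Adj]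
    (hG : G.Connected) (α : ℝ) (hα0 : 1 / 2 ≤ α) (hα1 : α < 1)
    (η : ℕ)
    (hη : η = (Finset.univ.filter
      (fun i => 2 * α * (G.edgeFinset.card : ℝ) / n ≤ (alphaMatrix_isHermitian G α).eigenvalues i)).card) :
    alphaEnergy G α ≤ 2 * ((n : ℝ) - 1) + 2 * ((η : ℝ) - 1) * (α * n - 1) - 4 * α * η * (G.edgeFinset.card : ℝ) / n ∧
    (alphaEnergy G α = 2 * ((n : ℝ) - 1) + 2 * ((η : ℝ) - 1) * (α * n - 1) - 4 * α * η * (G.edgeFinset.card : ℝ) / n ↔ G = ⊤) :=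
  stmt_11_general hn G α hα0 hα1 η hη
end
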